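/- arXiv:2403.10528 — 2 statements merged into one kernel-verified Lean document; each statement's English description precedes it below -/
import Mathlib

section
/- For all rational numbers a, b, t, u, v, if u^2 = (a^3 + b^3) t^2 - b^3 + a^3 and v^2 = (a^3 + b^3) t^2 + b^3 - a^3, then (2at)^6 - (2bt)^6 = (2tu)^4 - (2tv)^4. -/
theorem sixth_pow_sub_sixth_pow_eq_sq_sub_sq {R : Type*} [CommRing R] (a b t : R) :
    (2 * a * t) ^ 6 - (2 * b * t) ^ 6 =
      (4 * t ^ 2 * ((a ^ 3 + b ^ 3) * t ^ 2 - b ^ 3 + a ^ 3)) ^ 2 -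
        (4 * t ^ 2 * ((a ^ 3 + b ^ 3) * t ^ 2 + b ^ 3 - a ^ 3)) ^ 2 := by
  ring

theorem quartic_from_squares (a b t u v : ℚ)
    (hu : u ^ 2 = (a ^ 3 + b ^ 3) * t ^ 2 - b ^ 3 + a ^ 3)
    (hv : v ^ 2 = (a ^ 3 + b ^ 3) * t ^ 2 + b ^ 3 - a ^ 3) :
    (2 * a * t) ^ 6 - (2 * b * t) ^ 6 = (2 * t * u) ^ 4 - (2 * t * v) ^ 4 := by
  have fourth_pow_eq (w : ℚ) : (2 * t * w) ^ 4 = (4 * t ^ 2 * w ^ 2) ^ 2 := by ring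
  rw [sixth_pow_sub_sixth_pow_eq_sq_sub_sq, fourth_pow_eq u, fourth_pow_eq v, hu, hv]
end

section
/- There exist infinitely many pairs of rational numbers (U, V) satisfying V^2 = -63 U^4 + 16128. -/
/-!
The quartic is birational to the elliptic curve `E : y² = x³ + 196x`, via a map that sends the
point at infinity of `E` to `(3, 105)`. If a point of `E` has `|x|₂ = t²` with `t > 1`, then
`|y|₂ = t³` and the tangent slope there has norm `2t`, so doubling the point replaces `t` by `2t`.
Starting from `P = (1225/144, 82565/1728)`, where `t = 4`, the points `2ⁿ • P` therefore have
`|x|₂ = 4ⁿ⁺²`. Their images `(U, V)` on the quartic are `2`-adically close to `(3, 105)`, with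
`|U - 3|₂ = 2 / t`, so the `U` are pairwise distinct.
-/

open WeierstrassCurve

section padicNorm

variable {p : ℕ} [Fact p.Prime]

lemma padicNorm.add_eq_left_of_lt {q r : ℚ} (h : padicNorm p r < padicNorm p q) :
    padicNorm p (q + r) = padicNorm p q := by
  rw [padicNorm.add_eq_max_of_ne h.ne', max_eq_left h.le]

lemma padicNorm.sub_eq_left_of_lt {q r : ℚ} (h : padicNorm p r < padicNorm p q) :
    padicNorm p (q - r) = padicNorm p q := by
  rw [sub_eq_add_neg, padicNorm.add_eq_left_of_lt (by rwa [padicNorm.neg])]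

lemma padicNorm.eq_of_eq_prime_pow_mul {q : ℚ} (k m : ℕ) (hq : q = p ^ k * m) (hm : ¬p ∣ m) :
    padicNorm p q = ((p : ℚ) ^ k)⁻¹ := by
  rw [hq, padicNorm.mul, IsAbsoluteValue.abv_pow (padicNorm p), padicNorm.padicNorm_p_of_prime,
    (padicNorm.nat_eq_one_iff m).2 hm, mul_one, inv_pow]

end padicNorm

namespace WeierstrassCurve.Affine

variable {F : Type*} [Field F] [DecidableEq F] (W : Affine F)

def tangentDouble (P : F × F) : F × F :=
  (W.addX P.1 P.1 (W.slope P.1 P.1 P.2 P.2), W.addY P.1 P.1 P.2 (W.slope P.1 P.1 P.2 P.2))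

lemma equation_tangentDouble {P : F × F} (h : W.Equation P.1 P.2) (hy : P.2 ≠ W.negY P.1 P.2) :
    W.Equation (W.tangentDouble P).1 (W.tangentDouble P).2 :=
  W.equation_add h h fun h' => hy h'.2

end WeierstrassCurve.Affine

def shortWeierstrass (A B : ℚ) : Affine ℚ :=
  { a₁ := 0, a₂ := 0, a₃ := 0, a₄ := A, a₆ := B }

lemma shortWeierstrass_equation_iff {A B x y : ℚ} :
    (shortWeierstrass A B).Equation x y ↔ y ^ 2 = x ^ 3 + A * x + B := by
  simp [shortWeierstrass, Affine.equation_iff]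

lemma shortWeierstrass_slope_self {A B x y : ℚ} (hy : y ≠ 0) :
    (shortWeierstrass A B).slope x x y y = (3 * x ^ 2 + A) / (2 * y) := by
  rw [Affine.slope_of_Y_ne rfl (by simpa [shortWeierstrass, self_eq_neg] using hy)]
  simp only [shortWeierstrass, Affine.negY]
  ring

lemma shortWeierstrass_equation_tangentDouble {A B x y : ℚ}
    (h : (shortWeierstrass A B).Equation x y) (hy : y ≠ 0) :
    (shortWeierstrass A B).Equation ((shortWeierstrass A B).tangentDouble (x, y)).1
      ((shortWeierstrass A B).tangentDouble (x, y)).2 :=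
  Affine.equation_tangentDouble _ h (by simpa [shortWeierstrass, self_eq_neg] using hy)

section TwoAdic

variable {A B x y t : ℚ} (hA : padicNorm 2 A ≤ 1) (hB : padicNorm 2 B ≤ 1)
  (ht : 1 < t) (hx : padicNorm 2 x = t ^ 2)
include hA hB ht hx

lemma shortWeierstrass_padicNorm_two_y (h : (shortWeierstrass A B).Equation x y) :
    padicNorm 2 y = t ^ 3 := by
  rw [shortWeierstrass_equation_iff] at h
  have hAx : padicNorm 2 (A * x) < padicNorm 2 (x ^ 3) := by
    rw [padicNorm.mul, IsAbsoluteValue.abv_pow (padicNorm 2), hx]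
    nlinarith [padicNorm.nonneg (p := 2) A, one_lt_pow₀ ht (by norm_num : 4 ≠ 0)]
  have hcubic : padicNorm 2 (x ^ 3 + A * x) = t ^ 6 := by
    rw [padicNorm.add_eq_left_of_lt hAx, IsAbsoluteValue.abv_pow (padicNorm 2), hx]
    ring
  have hsq : padicNorm 2 y ^ 2 = (t ^ 3) ^ 2 := by
    rw [← IsAbsoluteValue.abv_pow (padicNorm 2), h,
      padicNorm.add_eq_left_of_lt (by linarith [one_lt_pow₀ ht (by norm_num : 6 ≠ 0)]), hcubic]
    ring
  exact (pow_left_inj₀ (padicNorm.nonneg y) (by positivity) two_ne_zero).1 hsq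

lemma shortWeierstrass_y_ne_zero (h : (shortWeierstrass A B).Equation x y) : y ≠ 0 := by
  have hy := shortWeierstrass_padicNorm_two_y hA hB ht hx h
  rintro rfl
  rw [padicNorm.zero] at hy
  linarith [pow_pos (by linarith : (0 : ℚ) < t) 3]

lemma shortWeierstrass_padicNorm_two_tangentDouble_fst
    (h : (shortWeierstrass A B).Equation x y) :
    padicNorm 2 ((shortWeierstrass A B).tangentDouble (x, y)).1 = (2 * t) ^ 2 := by
  have hy := shortWeierstrass_padicNorm_two_y hA hB ht hx h
  have hy0 := shortWeierstrass_y_ne_zero hA hB ht hx h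
  have h2 : padicNorm 2 (2 : ℚ) = 1 / 2 := by
    rw [padicNorm.eq_of_eq_prime_pow_mul 1 1 (by norm_num) (by decide)]; norm_num
  have h3 : padicNorm 2 (3 : ℚ) = 1 := by
    rw [padicNorm.eq_of_eq_prime_pow_mul 0 3 (by norm_num) (by decide)]; norm_num
  have hnum : padicNorm 2 (3 * x ^ 2 + A) = t ^ 4 := by
    have h3x : padicNorm 2 (3 * x ^ 2) = t ^ 4 := by
      rw [padicNorm.mul, h3, IsAbsoluteValue.abv_pow (padicNorm 2), hx]; ring
    rw [padicNorm.add_eq_left_of_lt (by linarith [one_lt_pow₀ ht (by norm_num : 4 ≠ 0)]), h3x]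
  have hslope : padicNorm 2 ((3 * x ^ 2 + A) / (2 * y)) = 2 * t := by
    rw [padicNorm.div, padicNorm.mul, hnum, h2, hy]
    field_simp
  have hdouble : ((shortWeierstrass A B).tangentDouble (x, y)).1 =
      ((3 * x ^ 2 + A) / (2 * y)) ^ 2 - 2 * x := by
    rw [Affine.tangentDouble, shortWeierstrass_slope_self hy0, Affine.addX]
    simp only [shortWeierstrass]
    ring
  have hsq : padicNorm 2 (((3 * x ^ 2 + A) / (2 * y)) ^ 2) = (2 * t) ^ 2 := by
    rw [IsAbsoluteValue.abv_pow (padicNorm 2), hslope]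
  rw [hdouble, padicNorm.sub_eq_left_of_lt (by rw [hsq, padicNorm.mul, h2, hx]; nlinarith), hsq]

end TwoAdic

noncomputable def toQuartic : ℚ × ℚ → ℚ × ℚ
  | (x, y) =>
    ((12 * x ^ 2 - 2352 + 70 * y) / (4 * x ^ 2 + 63 * x + 784),
      (420 * (4 * x ^ 4 - 63 * x ^ 3 + 12348 * x - 153664)
          - 1008 * (9 * x ^ 2 + 448 * x + 1764) * y) / (4 * x ^ 2 + 63 * x + 784) ^ 2)

lemma toQuartic_denom_pos (x : ℚ) : 0 < 4 * x ^ 2 + 63 * x + 784 := by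
  nlinarith [sq_nonneg (8 * x + 63)]

lemma toQuartic_mem {x y : ℚ} (h : (shortWeierstrass 196 0).Equation x y) :
    (toQuartic (x, y)).2 ^ 2 = -63 * (toQuartic (x, y)).1 ^ 4 + 16128 := by
  rw [shortWeierstrass_equation_iff, add_zero] at h
  have hD := (toQuartic_denom_pos x).ne'
  simp only [toQuartic]
  rw [div_pow, div_pow, ← pow_mul, mul_div_assoc', div_add' _ _ _ (pow_ne_zero _ hD),
    div_left_inj' (pow_ne_zero _ hD)]
  linear_combination (13407874873344 - 203297472000 * y + 1512630000 * y ^ 2 + 1902409338816 * x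
    + 131637187584 * x ^ 2 + 1037232000 * x ^ 2 * y + 9706170096 * x ^ 3 + 349017984 * x ^ 4) * h

lemma padicNorm_two_toQuartic_fst_sub_three {x y t : ℚ}
    (h : (shortWeierstrass 196 0).Equation x y) (ht : 2 < t) (hx : padicNorm 2 x = t ^ 2) :
    padicNorm 2 ((toQuartic (x, y)).1 - 3) = 2 / t := by
  have hy : padicNorm 2 y = t ^ 3 :=
    shortWeierstrass_padicNorm_two_y (by exact_mod_cast padicNorm.of_nat 196) (by simp)
      (by linarith) hx h
  have hD := (toQuartic_denom_pos x).ne'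
  have hU : (toQuartic (x, y)).1 - 3 =
      (70 * y - (189 * x + 4704)) / (4 * x ^ 2 + 63 * x + 784) := by
    simp only [toQuartic]
    rw [eq_div_iff hD, sub_mul, div_mul_cancel₀ _ hD]
    ring
  have hsmall (a b : ℕ) : padicNorm 2 (a * x + b) ≤ t ^ 2 := by
    refine padicNorm.nonarchimedean.trans (max_le ?_ ?_)
    · rw [padicNorm.mul, hx]
      nlinarith [padicNorm.of_nat (p := 2) a, padicNorm.nonneg (p := 2) a]
    · nlinarith [padicNorm.of_nat (p := 2) b]
  have h70y : padicNorm 2 (70 * y) = t ^ 3 / 2 := by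
    rw [padicNorm.mul, padicNorm.eq_of_eq_prime_pow_mul 1 35 (by norm_num) (by decide), hy]
    norm_num; ring
  have h4x : padicNorm 2 (4 * x ^ 2) = t ^ 4 / 4 := by
    rw [padicNorm.mul, padicNorm.eq_of_eq_prime_pow_mul 2 1 (by norm_num) (by decide),
      IsAbsoluteValue.abv_pow (padicNorm 2), hx]
    norm_num; ring
  have h189 : padicNorm 2 (189 * x + 4704) < t ^ 3 / 2 := by
    have : padicNorm 2 (189 * x + 4704) ≤ t ^ 2 := by exact_mod_cast hsmall 189 4704
    nlinarith [pow_pos (by linarith : 0 < t) 2]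
  have h63 : padicNorm 2 (63 * x + 784) < t ^ 4 / 4 := by
    have : padicNorm 2 (63 * x + 784) ≤ t ^ 2 := by exact_mod_cast hsmall 63 784
    nlinarith [pow_pos (by linarith : 0 < t) 2, mul_lt_mul'' ht ht (by norm_num) (by norm_num)]
  rw [hU, padicNorm.div, padicNorm.sub_eq_left_of_lt (h70y ▸ h189), h70y, add_assoc,
    padicNorm.add_eq_left_of_lt (h4x ▸ h63), h4x]
  field_simp
  norm_num

def seed : ℚ × ℚ := (1225 / 144, 82565 / 1728)

noncomputable def seedDoublings (n : ℕ) : ℚ × ℚ :=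
  (shortWeierstrass 196 0).tangentDouble^[n] seed

lemma equation_seedDoublings_and_padicNorm_two (n : ℕ) :
    (shortWeierstrass 196 0).Equation (seedDoublings n).1 (seedDoublings n).2 ∧
      padicNorm 2 (seedDoublings n).1 = (2 ^ (n + 2)) ^ 2 := by
  induction n with
  | zero =>
    refine ⟨shortWeierstrass_equation_iff.2 (by norm_num [seedDoublings, seed]), ?_⟩
    simp only [seedDoublings, seed, Function.iterate_zero, id, padicNorm.div,
      padicNorm.eq_of_eq_prime_pow_mul (p := 2) (q := 144) 4 9 (by norm_num) (by decide),
      padicNorm.eq_of_eq_prime_pow_mul (p := 2) (q := 1225) 0 1225 (by norm_num) (by decide)]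
    norm_num
  | succ n ih =>
    obtain ⟨h, hx⟩ := ih
    have hA : padicNorm 2 (196 : ℚ) ≤ 1 := by exact_mod_cast padicNorm.of_nat 196
    have hB : padicNorm 2 (0 : ℚ) ≤ 1 := by simp
    have ht : (1 : ℚ) < 2 ^ (n + 2) := one_lt_pow₀ (by norm_num) (by omega)
    rw [seedDoublings, Function.iterate_succ_apply', ← seedDoublings]
    refine ⟨shortWeierstrass_equation_tangentDouble h (shortWeierstrass_y_ne_zero hA hB ht hx h),
      ?_⟩
    rw [shortWeierstrass_padicNorm_two_tangentDouble_fst hA hB ht hx h]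
    ring

theorem infinitely_many_rational_points :
    {p : ℚ × ℚ | p.2 ^ 2 = -63 * p.1 ^ 4 + 16128}.Infinite := by
  have hU (n : ℕ) : padicNorm 2 ((toQuartic (seedDoublings n)).1 - 3) = 2 / 2 ^ (n + 2) :=
    padicNorm_two_toQuartic_fst_sub_three (equation_seedDoublings_and_padicNorm_two n).1
      (lt_of_lt_of_le (by norm_num) (pow_le_pow_right₀ one_le_two (by omega : 2 ≤ n + 2)))
      (equation_seedDoublings_and_padicNorm_two n).2
  refine Set.infinite_of_injective_forall_mem (f := fun n => toQuartic (seedDoublings n))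
    (fun m n hmn => ?_) (fun n => toQuartic_mem (equation_seedDoublings_and_padicNorm_two n).1)
  have hUm := hU m
  rw [show toQuartic (seedDoublings m) = toQuartic (seedDoublings n) from hmn, hU n] at hUm
  have hpow : (2 : ℚ) ^ (n + 2) = 2 ^ (m + 2) := by
    field_simp at hUm
    linarith
  simpa using (pow_right_injective₀ two_pos (by norm_num) hpow).symm
end
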